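/- Let G be a middle and right nuclear normal subgroup of a loop L and K a loop. Then L has a factor-free Schreier decomposition L(Θ,e) with respect to G (with K as the first factor) if and only if L contains a left transversal Σ of L/G which is a subloop of L isomorphic to K. -/

import Mathlib

universe u v

/-- A loop: a type with a multiplication all of whose left and right translations
are bijective, together with a two-sided identity element. -/
class MLoop (L : Type u) extends Mul L, One L where
  mul_left_bij : ∀ x : L, Function.Bijective fun y : L => x * y
  mul_right_bij : ∀ x : L, Function.Bijective fun y : L => y * x
  one_mul : ∀ x : L, 1 * x = x
  mul_one : ∀ x : L, x * 1 = x

instance (L : Type u) [MLoop L] : Nonempty L := ⟨1⟩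

/-- Left division `x \ y = λ_x⁻¹ y`. -/
noncomputable def MLoop.ldiv {L : Type u} [MLoop L] (x y : L) : L :=
  Function.invFun (fun z : L => x * z) y

/-- Right division `x / y = ρ_y⁻¹ x`. -/
noncomputable def MLoop.rdiv {L : Type u} [MLoop L] (x y : L) : L :=
  Function.invFun (fun z : L => z * y) x

/-- Middle inner mapping `T_x = ρ_x⁻¹ ∘ λ_x`, i.e. `T_x t` is the unique `z` with
`z * x = x * t`. -/
noncomputable def MLoop.midInner {L : Type u} [MLoop L] (x t : L) : L :=
  Function.invFun (fun z : L => z * x) (x * t)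

/-- The left nucleus of a multiplicative structure. -/
def leftNucleus (L : Type u) [Mul L] : Set L :=
  {u : L | ∀ x y : L, u * x * y = u * (x * y)}

/-- The right nucleus of a multiplicative structure. -/
def rightNucleus (L : Type u) [Mul L] : Set L :=
  {u : L | ∀ x y : L, x * y * u = x * (y * u)}

/-- The middle nucleus of a multiplicative structure. -/
def middleNucleus (L : Type u) [Mul L] : Set L :=
  {u : L | ∀ x y : L, x * u * y = x * (u * y)}

/-- A subset of a loop is a normal subloop if it is the kernel of a loop homomorphism. -/
def IsNormalSubloop {L : Type u} [MLoop L] (N : Set L) : Prop :=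
  ∃ (M : Type u) (i : MLoop M) (f : L → M),
    (∀ x y : L, f (x * y) = i.toMul.mul (f x) (f y)) ∧ N = {x : L | f x = i.toOne.one}

/-- The data `(Θ, f)` of a Schreier extension of the group `G` by the loop `K`. -/
structure SchreierData (K : Type u) (G : Type v) [MLoop K] [Group G] where
  Θ : K → G ≃* G
  f : K → K → G
  theta_one : Θ 1 = MulEquiv.refl G
  f_one_left : ∀ σ : K, f 1 σ = 1
  f_one_right : ∀ σ : K, f σ 1 = 1

/-- The multiplication of the Schreier loop `L(Θ,f)` on `K × G`:
`(τ,t)∘(σ,s) = (τσ, f(τ,σ)·Θ_σ(t)·s)`. -/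
def SchreierData.mul {K : Type u} {G : Type v} [MLoop K] [Group G]
    (D : SchreierData K G) (p q : K × G) : K × G :=
  (p.1 * q.1, D.f p.1 q.1 * D.Θ q.1 p.2 * q.2)


/-!
A decomposition `F : K × G → L` satisfies `F (σ, t) = F (σ, 1) * t`, and as `G` is right nuclear,
`(σ, t) ↦ φ σ * t` is bijective exactly when `φ` is injective with range a left transversal of
`L/G`; factor-freeness of the decomposition is multiplicativity of `φ = F (·, 1)`.
Conversely, given a subloop transversal `φ K`, take `Θ_σ := T_{φ σ}⁻¹`, the inverse of the middle
inner mapping restricted to `G` (an automorphism since `G` is normal, middle and right nuclear).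
Then `φ σ * Θ_σ t = t * φ σ`, which is what makes `(σ, t) ↦ φ σ * t` multiplicative:
`(φ τ * t) * (φ σ * s) = φ τ * (t * φ σ) * s = (φ τ * φ σ) * (Θ_σ t * s)`.
-/

namespace MLoop

variable {L : Type u} [MLoop L]

theorem mul_ldiv (x y : L) : x * ldiv x y = y :=
  Function.invFun_eq ((mul_left_bij x).2 y)

theorem midInner_mul_self (x t : L) : midInner x t * x = x * t :=
  Function.invFun_eq ((mul_right_bij x).2 (x * t))

theorem mul_left_cancel {x a b : L} (h : x * a = x * b) : a = b :=
  (mul_left_bij x).1 h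

theorem mul_right_cancel {x a b : L} (h : a * x = b * x) : a = b :=
  (mul_right_bij x).1 h

theorem map_one_of_map_mul {K : Type v} [MLoop K] {φ : K → L}
    (hφ : ∀ a b : K, φ (a * b) = φ a * φ b) : φ 1 = 1 :=
  mul_left_cancel (x := φ 1) (by rw [← hφ, MLoop.mul_one, MLoop.mul_one])

variable {M : Type v} [MLoop M] {f : L → M}

theorem map_ldiv_mul_self_eq_one (hf : ∀ x y : L, f (x * y) = f x * f y) {g : L}
    (hg : f g = 1) (x : L) : f (ldiv x (g * x)) = 1 := by
  have h := congrArg f (mul_ldiv x (g * x))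
  rw [hf, hf, hg, MLoop.one_mul] at h
  exact mul_left_cancel (h.trans (MLoop.mul_one _).symm)

theorem map_midInner_eq_one (hf : ∀ x y : L, f (x * y) = f x * f y) {g : L}
    (hg : f g = 1) (x : L) : f (midInner x g) = 1 := by
  have h := congrArg f (midInner_mul_self x g)
  rw [hf, hf, hg, MLoop.mul_one] at h
  exact mul_right_cancel (h.trans (MLoop.one_mul _).symm)

end MLoop

namespace IsNormalSubloop

variable {L : Type u} [MLoop L] {N : Set L}

theorem ldiv_mul_self_mem (hN : IsNormalSubloop N) {g : L} (hg : g ∈ N) (x : L) :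
    MLoop.ldiv x (g * x) ∈ N := by
  obtain ⟨M, _, f, hf, rfl⟩ := hN
  exact MLoop.map_ldiv_mul_self_eq_one hf hg x

theorem midInner_mem (hN : IsNormalSubloop N) {g : L} (hg : g ∈ N) (x : L) :
    MLoop.midInner x g ∈ N := by
  obtain ⟨M, _, f, hf, rfl⟩ := hN
  exact MLoop.map_midInner_eq_one hf hg x

end IsNormalSubloop

namespace SchreierData

variable {K : Type u} {G : Type v} [MLoop K] [Group G]

def factorFree (Θ : K → G ≃* G) (hΘ : Θ 1 = MulEquiv.refl G) : SchreierData K G where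
  Θ := Θ
  f _ _ := 1
  theta_one := hΘ
  f_one_left _ := rfl
  f_one_right _ := rfl

variable {L : Type*} [Mul L] {F : K × G → L}

theorem map_eq_map_mk_one_mul (D : SchreierData K G) (hF : ∀ p q, F (D.mul p q) = F p * F q)
    (σ : K) (t : G) : F (σ, t) = F (σ, 1) * F (1, t) := by
  rw [← hF]
  simp [SchreierData.mul, D.theta_one, D.f_one_right, MLoop.mul_one]

theorem map_mk_one_mul (D : SchreierData K G) (hf : ∀ σ τ : K, D.f σ τ = 1)
    (hF : ∀ p q, F (D.mul p q) = F p * F q) (a b : K) : F (a * b, 1) = F (a, 1) * F (b, 1) := by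
  rw [← hF]
  simp [SchreierData.mul, hf]

end SchreierData

section NuclearSubgroup

variable {L : Type u} [MLoop L] {G : Set L} [Group G]

theorem mul_coe_mul_coe_inv (hmul : ∀ a b : G, ((a * b : G) : L) = (a : L) * (b : L))
    (hone : ((1 : G) : L) = 1) (hr : G ⊆ rightNucleus L) (x : L) (g : G) :
    x * (g : L) * ((g⁻¹ : G) : L) = x := by
  rw [hr (g⁻¹).2 x g, ← hmul, mul_inv_cancel, hone, MLoop.mul_one]

theorem bijective_mul_coe_iff {K : Type v}
    (hmul : ∀ a b : G, ((a * b : G) : L) = (a : L) * (b : L)) (hone : ((1 : G) : L) = 1)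
    (hr : G ⊆ rightNucleus L) (φ : K → L) :
    Function.Bijective (fun p : K × G => φ p.1 * (p.2 : L)) ↔
      Function.Injective φ ∧ ∀ x : L, ∃! s : L, s ∈ Set.range φ ∧ ∃ g : G, s = x * (g : L) := by
  have hcancel := mul_coe_mul_coe_inv hmul hone hr
  constructor
  · rintro ⟨hinj, hsurj⟩
    refine ⟨fun a b h => congrArg Prod.fst (@hinj (a, 1) (b, 1) ?_), fun x => ?_⟩
    · simp only [hone, MLoop.mul_one, h]
    obtain ⟨⟨σ, t⟩, rfl⟩ := hsurj x
    refine ⟨φ σ, ⟨⟨σ, rfl⟩, t⁻¹, (hcancel _ t).symm⟩, ?_⟩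
    rintro _ ⟨⟨σ', rfl⟩, g, hg⟩
    rw [hr g.2, ← hmul] at hg
    have h := @hinj (σ', 1) (σ, t * g) (by simp only [hone, MLoop.mul_one, hg])
    rw [(Prod.mk.inj h).1]
  · rintro ⟨hinj, htrans⟩
    refine ⟨?_, fun x => ?_⟩
    · rintro ⟨τ, t⟩ ⟨σ, s⟩ (h : φ τ * (t : L) = φ σ * s)
      obtain ⟨w, -, hw⟩ := htrans (φ σ * (s : L))
      have hτ : φ τ = w := hw _ ⟨⟨τ, rfl⟩, t⁻¹, by rw [← h, hcancel]⟩
      have hσ : φ σ = w := hw _ ⟨⟨σ, rfl⟩, s⁻¹, (hcancel _ s).symm⟩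
      obtain rfl : τ = σ := hinj (hτ.trans hσ.symm)
      exact Prod.ext rfl (Subtype.ext (MLoop.mul_left_cancel h))
    · obtain ⟨_, ⟨⟨σ, rfl⟩, g, hg⟩, -⟩ := htrans x
      exact ⟨(σ, g⁻¹), by simp only [hg, hcancel]⟩

noncomputable def midInnerEquiv (hmul : ∀ a b : G, ((a * b : G) : L) = (a : L) * (b : L))
    (hN : IsNormalSubloop G) (hnuc : G ⊆ middleNucleus L ∩ rightNucleus L) (x : L) :
    G ≃* G where
  toFun g := ⟨MLoop.midInner x g, hN.midInner_mem g.2 x⟩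
  invFun g := ⟨MLoop.ldiv x (g * x), hN.ldiv_mul_self_mem g.2 x⟩
  left_inv g := Subtype.ext <| MLoop.mul_left_cancel (x := x) <| by
    rw [MLoop.mul_ldiv, MLoop.midInner_mul_self]
  right_inv g := Subtype.ext <| MLoop.mul_right_cancel (x := x) <| by
    rw [MLoop.midInner_mul_self, MLoop.mul_ldiv]
  map_mul' a b := Subtype.ext <| MLoop.mul_right_cancel (x := x) <| by
    calc MLoop.midInner x ((a * b : G) : L) * x = x * (a * b : L) := by
          rw [MLoop.midInner_mul_self, hmul]
      _ = x * a * b := ((hnuc a.2).1 x b).symm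
      _ = MLoop.midInner x a * x * b := by rw [MLoop.midInner_mul_self]
      _ = MLoop.midInner x a * (x * b) := (hnuc b.2).2 _ _
      _ = MLoop.midInner x a * (MLoop.midInner x b * x) := by rw [MLoop.midInner_mul_self]
      _ = MLoop.midInner x a * MLoop.midInner x b * x :=
          ((hnuc (hN.midInner_mem b.2 x)).1 _ _).symm
      _ = _ := by rw [hmul]

theorem mul_midInnerEquiv_symm (hmul : ∀ a b : G, ((a * b : G) : L) = (a : L) * (b : L))
    (hN : IsNormalSubloop G) (hnuc : G ⊆ middleNucleus L ∩ rightNucleus L) (x : L) (g : G) :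
    x * ((midInnerEquiv hmul hN hnuc x).symm g : L) = g * x :=
  MLoop.mul_ldiv x _

theorem midInnerEquiv_one (hmul : ∀ a b : G, ((a * b : G) : L) = (a : L) * (b : L))
    (hN : IsNormalSubloop G) (hnuc : G ⊆ middleNucleus L ∩ rightNucleus L) :
    midInnerEquiv hmul hN hnuc 1 = MulEquiv.refl G :=
  MulEquiv.ext fun g => Subtype.ext <| MLoop.mul_right_cancel (x := 1) <| by
    change MLoop.midInner 1 (g : L) * 1 = g * 1
    rw [MLoop.midInner_mul_self, MLoop.mul_one, MLoop.one_mul]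

theorem factorFree_mul_map {K : Type v} [MLoop K]
    (hmul : ∀ a b : G, ((a * b : G) : L) = (a : L) * (b : L))
    (hnuc : G ⊆ middleNucleus L ∩ rightNucleus L)
    {φ : K → L} (hφ : ∀ a b : K, φ (a * b) = φ a * φ b)
    (Θ : K → G ≃* G) (hΘ1 : Θ 1 = MulEquiv.refl G)
    (hΘ : ∀ σ t, φ σ * (Θ σ t : L) = t * φ σ) (p q : K × G) :
    φ ((SchreierData.factorFree Θ hΘ1).mul p q).1 *
        ((SchreierData.factorFree Θ hΘ1).mul p q).2 =
      φ p.1 * p.2 * (φ q.1 * q.2) := by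
  obtain ⟨τ, t⟩ := p
  obtain ⟨σ, s⟩ := q
  change φ (τ * σ) * ((1 * Θ σ t * s : G) : L) = _
  rw [one_mul, hφ, hmul]
  calc φ τ * φ σ * ((Θ σ t : L) * s)
      = φ τ * φ σ * (Θ σ t : L) * s := ((hnuc s.2).2 _ _).symm
    _ = φ τ * (φ σ * (Θ σ t : L)) * s := by rw [(hnuc (Θ σ t).2).2]
    _ = φ τ * (t * φ σ) * s := by rw [hΘ]
    _ = φ τ * t * φ σ * s := by rw [(hnuc t.2).1]
    _ = φ τ * t * (φ σ * s) := (hnuc s.2).2 _ _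

end NuclearSubgroup

/-- a loop `L` has a factor-free Schreier decomposition `L(Θ,e)` with
respect to a middle and right nuclear normal subgroup `G`, with first factor the loop
`K`, iff `L` contains a left transversal `S` of `L/G` which is a subloop of `L`
isomorphic to `K` (i.e. `S` is the range of an injective multiplicative map `K → L`). -/
theorem schreier_stmt18 {L : Type u} [MLoop L] (G : Set L) [Group G]
    (hGmul : ∀ a b : G, ((a * b : G) : L) = (a : L) * (b : L))
    (hGone : ((1 : G) : L) = 1)
    (hnorm : IsNormalSubloop G)
    (hnuc : G ⊆ middleNucleus L ∩ rightNucleus L)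
    {K : Type u} [MLoop K] :
    (∃ (D : SchreierData K G) (F : K × G → L),
        (∀ σ τ : K, D.f σ τ = 1) ∧
        Function.Bijective F ∧ (∀ p q : K × G, F (D.mul p q) = F p * F q) ∧
        ∀ t : G, F (1, t) = (t : L)) ↔
    (∃ S : Set L, (1 : L) ∈ S ∧
      (∀ x : L, ∃! s : L, s ∈ S ∧ ∃ g : G, s = x * (g : L)) ∧
      ∃ φ : K → L, Function.Injective φ ∧ (∀ a b : K, φ (a * b) = φ a * φ b) ∧
        Set.range φ = S) := by
  have hr : G ⊆ rightNucleus L := hnuc.trans Set.inter_subset_right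
  constructor
  · rintro ⟨D, F, hf, hFbij, hFmul, hF1⟩
    have hF : F = fun p => F (p.1, 1) * (p.2 : L) :=
      funext fun ⟨σ, t⟩ => by rw [D.map_eq_map_mk_one_mul hFmul, hF1]
    obtain ⟨hinj, htrans⟩ :=
      (bijective_mul_coe_iff hGmul hGone hr (fun σ => F (σ, 1))).1 (hF ▸ hFbij)
    refine ⟨_, ?_, htrans, _, hinj, D.map_mk_one_mul hf hFmul, rfl⟩
    exact ⟨1, (hF1 1).trans hGone⟩
  · rintro ⟨S, -, htrans, φ, hφinj, hφmul, rfl⟩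
    have hφ1 : φ 1 = 1 := MLoop.map_one_of_map_mul hφmul
    set Θ : K → G ≃* G := fun σ => (midInnerEquiv hGmul hnorm hnuc (φ σ)).symm
    have hΘ1 : Θ 1 = MulEquiv.refl G := by
      simp only [Θ, hφ1, midInnerEquiv_one, MulEquiv.refl_symm]
    refine ⟨SchreierData.factorFree Θ hΘ1, fun p => φ p.1 * p.2, fun _ _ => rfl,
      (bijective_mul_coe_iff hGmul hGone hr φ).2 ⟨hφinj, htrans⟩,
      factorFree_mul_map hGmul hnuc hφmul Θ hΘ1 fun σ =>
        mul_midInnerEquiv_symm hGmul hnorm hnuc (φ σ),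
      fun t => ?_⟩
    dsimp only
    rw [hφ1, MLoop.one_mul]
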